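/- arXiv:2303.17928 — 7 statements merged into one kernel-verified Lean document; each statement's English description precedes it below -/
import Mathlib

section
/- Fix a positive integer m. Let R be a finite commutative ring with characteristic N, and let χ be a nontrivial additive character of R. Then | (1/|R|^m) · ∑_{h_1, ..., h_m ∈ R} χ(h_1 · h_2 ⋯ h_m) | ≤ (m−1)/lpf(N). -/
open scoped BigOperators Classical

/-- `χ : R → ℂ` is an additive character: a homomorphism from `(R, +)` to the unit circle. -/
def IsAddCharFn {R : Type*} [AddGroup R] (χ : R → ℂ) : Prop :=
  (∀ x y, χ (x + y) = χ x * χ y) ∧ ∀ x, ‖χ x‖ = 1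

/-!
Summing over the last variable first, `∑ₓ χ(a x)` is `|R|` when `a` lies in the ideal
`I = {a | χ(a ·) = 1}` and `0` otherwise, so the normalised sum is the proportion of
`(h₁, …, hₘ₋₁)` with `h₁ ⋯ hₘ₋₁ ∈ I`. Since `χ` is nontrivial, `I` is proper and lies in a
maximal ideal `M`. A product lies in `M` only if one of its factors does, so that proportion is
at most `(m - 1) / |R/M|`; and `|R/M|` is at least the characteristic of the field `R/M`, a prime
dividing `N`.
-/

open Finset

theorem minFac_ringChar_le_card_of_ringHom {R S : Type*} [Ring R] [Ring S] [Finite S]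
    [Nontrivial S] (f : R →+* S) : (ringChar R).minFac ≤ Nat.card S := by
  have hdvd : ringChar S ∣ ringChar R :=
    ringChar.dvd (by rw [← map_natCast f, ringChar.Nat.cast_ringChar, map_zero])
  have h0 : ringChar S ≠ 0 := CharP.char_ne_zero_of_finite S _
  have h1 : ringChar S ≠ 1 := CharP.ringChar_ne_one
  have := Fintype.ofFinite S
  calc (ringChar R).minFac ≤ ringChar S := Nat.minFac_le_of_dvd (by omega) hdvd
    _ ≤ Nat.card S := Nat.le_of_dvd Nat.card_pos
        (ringChar.dvd (by rw [Nat.card_eq_fintype_card]; exact Nat.cast_card_eq_zero S))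

theorem AddSubgroup.card_eval_mem_mul_index {ι G : Type*} [AddGroup G] (H : AddSubgroup G)
    (i : ι) : Nat.card {g : ι → G // g i ∈ H} * H.index = Nat.card (ι → G) := by
  have hsurj : Function.Surjective (Pi.evalAddMonoidHom (fun _ => G) i) :=
    Function.surjective_eval i
  rw [← H.index_comap_of_surjective hsurj]
  exact (H.comap (Pi.evalAddMonoidHom (fun _ => G) i)).card_mul_index

theorem Ideal.IsPrime.card_prod_mem_mul_card_quotient_le {R ι : Type*} [CommRing R] [Fintype R]
    [Fintype ι] [DecidableEq ι] {P : Ideal R} (hP : P.IsPrime) :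
    #{g : ι → R | ∏ i, g i ∈ P} * Nat.card (R ⧸ P)
      ≤ Fintype.card ι * Fintype.card R ^ Fintype.card ι := by
  have hsub : ({g : ι → R | ∏ i, g i ∈ P} : Finset _) ⊆ univ.biUnion fun i => {g | g i ∈ P} := by
    intro g hg
    simpa [hP.prod_mem_iff] using hg
  have hfiber (i : ι) :
      #{g : ι → R | g i ∈ P} * Nat.card (R ⧸ P) = Fintype.card R ^ Fintype.card ι := by
    rw [← Fintype.card_subtype, ← Nat.card_eq_fintype_card, ← Fintype.card_fun,
      ← Nat.card_eq_fintype_card]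
    exact P.toAddSubgroup.card_eval_mem_mul_index i
  calc #{g : ι → R | ∏ i, g i ∈ P} * Nat.card (R ⧸ P)
      ≤ (∑ i, #{g : ι → R | g i ∈ P}) * Nat.card (R ⧸ P) :=
        Nat.mul_le_mul_right _ ((card_le_card hsub).trans card_biUnion_le)
    _ = Fintype.card ι * Fintype.card R ^ Fintype.card ι := by
        rw [sum_mul, sum_congr rfl fun i _ => hfiber i, sum_const, card_univ, smul_eq_mul]

theorem Ideal.card_prod_mem_mul_minFac_ringChar_le {R ι : Type*} [CommRing R] [Fintype R]
    [Fintype ι] [DecidableEq ι] {I : Ideal R} (hI : I ≠ ⊤) :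
    #{g : ι → R | ∏ i, g i ∈ I} * (ringChar R).minFac
      ≤ Fintype.card ι * Fintype.card R ^ Fintype.card ι := by
  obtain ⟨M, hM, hIM⟩ := Ideal.exists_le_maximal I hI
  have := Ideal.Quotient.nontrivial_iff.2 hM.ne_top
  calc #{g : ι → R | ∏ i, g i ∈ I} * (ringChar R).minFac
      ≤ #{g : ι → R | ∏ i, g i ∈ M} * Nat.card (R ⧸ M) :=
        Nat.mul_le_mul (card_le_card (monotone_filter_right _ fun _ _ => @hIM _))
          (minFac_ringChar_le_card_of_ringHom (Ideal.Quotient.mk M))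
    _ ≤ Fintype.card ι * Fintype.card R ^ Fintype.card ι :=
        hM.isPrime.card_prod_mem_mul_card_quotient_le

def IsAddCharFn.toAddChar {R : Type*} [AddGroup R] {χ : R → ℂ} (hχ : IsAddCharFn χ) :
    AddChar R ℂ where
  toFun := χ
  map_zero_eq_one' := by
    have hne : χ 0 ≠ 0 := by simpa using ne_of_eq_of_ne (hχ.2 0) one_ne_zero
    simpa [hne] using hχ.1 0 0
  map_add_eq_mul' := hχ.1

namespace AddChar

variable {R M : Type*} [CommRing R] [CommMonoid M]

def kerIdeal (ψ : AddChar R M) : Ideal R where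
  carrier := {a | ψ.mulShift a = 0}
  add_mem' {a b} (ha : ψ.mulShift a = 0) (hb : ψ.mulShift b = 0) := by
    show ψ.mulShift (a + b) = 0
    rw [← mulShift_mul, ha, hb]
    exact one_mul 1
  zero_mem' := mulShift_zero ψ
  smul_mem' c a (ha : ψ.mulShift a = 0) := by
    show ψ.mulShift (c * a) = 0
    rw [mul_comm, ← mulShift_mulShift, ha]
    ext
    simp

theorem mem_kerIdeal {ψ : AddChar R M} {a : R} : a ∈ ψ.kerIdeal ↔ ψ.mulShift a = 0 := Iff.rfl

theorem kerIdeal_ne_top {ψ : AddChar R M} (hψ : ψ ≠ 0) : ψ.kerIdeal ≠ ⊤ := by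
  rwa [Ne, Ideal.eq_top_iff_one, mem_kerIdeal, mulShift_one]

variable {K : Type*} [CommSemiring K] [IsDomain K] [Fintype R]

theorem sum_mul_eq_ite (ψ : AddChar R K) (a : R) :
    ∑ x, ψ (a * x) = if a ∈ ψ.kerIdeal then (Fintype.card R : K) else 0 :=
  sum_eq_ite (ψ.mulShift a)

theorem sum_prod_eq_card_mul (ψ : AddChar R K) (k : ℕ) :
    ∑ h : Fin (k + 1) → R, ψ (∏ i, h i)
      = #{g : Fin k → R | ∏ i, g i ∈ ψ.kerIdeal} * Fintype.card R := by
  rw [← (Fin.consEquiv fun _ => R).sum_comp, Fintype.sum_prod_type_right]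
  simp only [Fin.consEquiv_apply, Fin.prod_cons, mul_comm _ (∏ i, _), sum_mul_eq_ite]
  rw [sum_ite, sum_const_zero, add_zero, sum_const, nsmul_eq_mul]

end AddChar

theorem multiplicative_character_estimate_general
    (m : ℕ) (hm : 0 < m)
    (R : Type*) [CommRing R] [Fintype R]
    (χ : R → ℂ) (hχ : IsAddCharFn χ) (hnontriv : ¬ ∀ x, χ x = 1) :
    ‖(1 / (Fintype.card R : ℂ) ^ m) * ∑ h : Fin m → R, χ (∏ i, h i)‖
      ≤ ((m : ℝ) - 1) / (Nat.minFac (ringChar R) : ℝ) := by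
  obtain ⟨k, rfl⟩ := Nat.exists_eq_add_one_of_ne_zero hm.ne'
  set ψ := hχ.toAddChar
  set r := Fintype.card R
  have hsum : ∑ h : Fin (k + 1) → R, χ (∏ i, h i)
      = #{g : Fin k → R | ∏ i, g i ∈ ψ.kerIdeal} * r :=
    ψ.sum_prod_eq_card_mul k
  set a := #{g : Fin k → R | ∏ i, g i ∈ ψ.kerIdeal}
  have hψ : ψ ≠ 0 := AddChar.ne_zero_iff.2 (not_forall.1 hnontriv)
  have hcount : a * (ringChar R).minFac ≤ k * r ^ k := by
    simpa only [Fintype.card_fin] using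
      Ideal.card_prod_mem_mul_minFac_ringChar_le (ι := Fin k) (AddChar.kerIdeal_ne_top hψ)
  have hr : (0 : ℝ) < r := by exact_mod_cast Fintype.card_pos
  calc _ = (a : ℝ) / r ^ k := by
        rw [hsum, norm_mul, norm_div, norm_one, norm_pow, norm_mul, Complex.norm_natCast,
          Complex.norm_natCast, pow_succ]
        field_simp
    _ ≤ k / (ringChar R).minFac := by
        rw [div_le_div_iff₀ (by positivity) (by exact_mod_cast (ringChar R).minFac_pos)]
        exact_mod_cast hcount
    _ = _ := by push_cast; ring

/-- **Proposition (multiplicative character sum estimate).** For a positive integer `m`, a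
finite commutative ring `R` of characteristic `N`, and a nontrivial additive character `χ` of
`R`, one has `| (1/|R|^m) ∑_{h₁,…,hₘ} χ(h₁⋯hₘ) | ≤ (m−1)/lpf(N)`. -/
theorem multiplicative_character_estimate
    (m : ℕ) (hm : 0 < m)
    (R : Type*) [CommRing R] [Fintype R] [Nontrivial R]
    (χ : R → ℂ) (hχ : IsAddCharFn χ) (hnontriv : ¬ ∀ x, χ x = 1) :
    ‖(1 / (Fintype.card R : ℂ) ^ m) * ∑ h : Fin m → R, χ (∏ i, h i)‖
      ≤ ((m : ℝ) - 1) / (Nat.minFac (ringChar R) : ℝ) :=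
  multiplicative_character_estimate_general m hm R χ hχ hnontriv
end

section
/- Let n ≥ 1 be an integer and let P ∈ ℤ[y_1, ..., y_n] be a polynomial of degree at least one. Then there exist c, C > 0 and ε ∈ (0,1), each depending only on P, such that for any finite commutative ring R with characteristic N satisfying lpf(N) > C, the number of points y = (y_1, ..., y_n) ∈ R^n with P(y) = 0_R is at most |R|^{n−1} + c·|R|^n / lpf(N)^ε. -/
/-!
Reduce modulo a maximal ideal `𝔪` of `R`. The residue field `k = R/𝔪` has characteristic at
least `lpf(N)`, so once `lpf(N)` exceeds `|a|` for a nonzero coefficient `a` of `P`, the reduction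
of `P` over `k` is nonzero and Schwartz–Zippel bounds its zeros in `kⁿ` by `deg P · |k|ⁿ⁻¹`.
All fibres of the additive map `Rⁿ → kⁿ` have the same size, so `P` has at most
`deg P · |R|ⁿ / |k| ≤ deg P · |R|ⁿ / lpf(N)` zeros in `Rⁿ`.
-/

open Finset MvPolynomial
open scoped Classical

theorem ringChar_le_card (S : Type*) [Ring S] [Fintype S] : ringChar S ≤ Fintype.card S :=
  Nat.le_of_dvd Fintype.card_pos (ringChar.dvd (Nat.cast_card_eq_zero S))

theorem Nat.minFac_ringChar_le_ringChar {R S : Type*} [Ring R] [Ring S] [Nontrivial S]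
    [Finite S] (φ : R →+* S) : (ringChar R).minFac ≤ ringChar S := by
  have hS : 2 ≤ ringChar S := by
    have hne_one := CharP.ringChar_ne_one (R := S)
    have hne_zero := CharP.char_ne_zero_of_finite S (ringChar S)
    omega
  refine Nat.minFac_le_of_dvd hS (ringChar.dvd ?_)
  rw [← map_natCast φ, ringChar.Nat.cast_ringChar, map_zero]

theorem Int.cast_ne_zero_of_natAbs_lt_ringChar {S : Type*} [Ring S] {a : ℤ} (ha : a ≠ 0)
    (h : a.natAbs < ringChar S) : (a : S) ≠ 0 := by
  rw [Ne, CharP.intCast_eq_zero_iff S (ringChar S), Int.natCast_dvd]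
  exact fun hdvd => (Nat.le_of_dvd (Int.natAbs_pos.mpr ha) hdvd).not_gt h

theorem MvPolynomial.aeval_int_eq_eval_map {σ R : Type*} [CommRing R] (y : σ → R)
    (P : MvPolynomial σ ℤ) : aeval y P = eval y (map (Int.castRingHom R) P) := by
  rw [eval_map, aeval_def, algebraMap_int_eq]

theorem MvPolynomial.totalDegree_map_le {σ S T : Type*} [CommSemiring S] [CommSemiring T]
    (f : S →+* T) (P : MvPolynomial σ S) : (map f P).totalDegree ≤ P.totalDegree :=
  Finset.sup_mono (support_map_subset f P)

theorem AddMonoidHom.card_preimage_mul_card_eq {G H : Type*} [AddGroup G] [Fintype G]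
    [AddGroup H] [Fintype H] [DecidableEq H] (f : G →+ H) (hf : Function.Surjective f)
    (Z : Finset H) :
    #{g | f g ∈ Z} * Fintype.card H = #Z * Fintype.card G := by
  have hfiber (h : H) : #{g | f g = h} = #{g | f g = 0} :=
    card_fiber_eq_of_mem_range f (hf h) (hf 0)
  have hpre : #{g | f g ∈ Z} = #Z * #{g | f g = 0} := by
    rw [card_eq_sum_card_fiberwise (f := f) (t := Z) (fun g hg => by simpa using hg),
      ← smul_eq_mul, ← sum_const]
    refine sum_congr rfl fun h hh => ?_
    rw [← hfiber h, filter_filter]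
    congr 1; ext g
    simp only [mem_filter, mem_univ, true_and, and_iff_right_iff_imp]
    rintro rfl; exact hh
  have hG : Fintype.card G = Fintype.card H * #{g | f g = 0} := by
    rw [← card_univ, card_eq_sum_card_fiberwise (f := f) (t := univ) (fun _ _ => mem_univ _)]
    simp [hfiber]
  rw [hpre, hG]; ring

theorem MvPolynomial.card_zeros_mul_card_le {k : Type*} [CommRing k] [IsDomain k] [Fintype k]
    {n : ℕ} {P : MvPolynomial (Fin n) k} (hP : P ≠ 0) :
    #{x : Fin n → k | eval x P = 0} * Fintype.card k ≤ P.totalDegree * Fintype.card k ^ n := by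
  have h := schwartz_zippel_totalDegree hP univ
  rw [Fintype.piFinset_univ, card_univ, div_le_div_iff₀ (by positivity) (by positivity)] at h
  exact_mod_cast h

theorem MvPolynomial.card_zeros_mul_card_le_of_surjective {R k : Type*} [CommRing R] [Fintype R]
    [CommRing k] [IsDomain k] [Fintype k] {φ : R →+* k} (hφ : Function.Surjective φ) {n : ℕ}
    {P : MvPolynomial (Fin n) R} (hP : map φ P ≠ 0) :
    #{y : Fin n → R | eval y P = 0} * Fintype.card k
      ≤ (map φ P).totalDegree * Fintype.card R ^ n := by
  set Φ := φ.toAddMonoidHom.compLeft (Fin n)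
  set Zk : Finset (Fin n → k) := {z | eval z (map φ P) = 0}
  have hsub : #{y : Fin n → R | eval y P = 0} ≤ #{y | Φ y ∈ Zk} :=
    card_le_card <| monotone_filter_right _ fun y _ hy => by
      simp only [Zk, mem_filter, mem_univ, true_and]
      change eval (φ ∘ y) (map φ P) = 0
      rw [← map_eval, hy, map_zero]
  have hpre : #{y | Φ y ∈ Zk} * Fintype.card k ^ n = #Zk * Fintype.card R ^ n := by
    simpa using Φ.card_preimage_mul_card_eq hφ.comp_left Zk
  have hSZ : #Zk * Fintype.card k ≤ (map φ P).totalDegree * Fintype.card k ^ n :=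
    card_zeros_mul_card_le hP
  refine Nat.le_of_mul_le_mul_right (c := Fintype.card k ^ n) ?_ (pow_pos Fintype.card_pos n)
  calc _ ≤ #{y | Φ y ∈ Zk} * Fintype.card k ^ n * Fintype.card k := by
        rw [mul_right_comm]; gcongr
    _ = #Zk * Fintype.card k * Fintype.card R ^ n := by
        rw [hpre]; ring
    _ ≤ (map φ P).totalDegree * Fintype.card k ^ n * Fintype.card R ^ n := by
        gcongr
    _ = _ := by ring

theorem MvPolynomial.card_zeros_mul_minFac_ringChar_le {R : Type*} [CommRing R] [Fintype R]
    [Nontrivial R] {n : ℕ} {P : MvPolynomial (Fin n) ℤ} {s : Fin n →₀ ℕ} (hs : P.coeff s ≠ 0)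
    (hlt : (P.coeff s).natAbs < (ringChar R).minFac) :
    #{y : Fin n → R | aeval y P = 0} * (ringChar R).minFac
      ≤ P.totalDegree * Fintype.card R ^ n := by
  obtain ⟨m, hm⟩ := Ideal.exists_maximal R
  let _ : Fintype (R ⧸ m) := Fintype.ofFinite _
  set φ := Ideal.Quotient.mk m
  have hp : (ringChar R).minFac ≤ ringChar (R ⧸ m) := Nat.minFac_ringChar_le_ringChar φ
  have hmap : map φ (map (Int.castRingHom R) P) = map (Int.castRingHom (R ⧸ m)) P := by
    rw [map_map, RingHom.ext_int (φ.comp _) _]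
  have hne : map φ (map (Int.castRingHom R) P) ≠ 0 := by
    rw [hmap]
    intro h
    have hcoeff := congrArg (coeff s) h
    rw [coeff_map, coeff_zero, eq_intCast] at hcoeff
    exact Int.cast_ne_zero_of_natAbs_lt_ringChar hs (hlt.trans_le hp) hcoeff
  calc #{y : Fin n → R | aeval y P = 0} * (ringChar R).minFac
      ≤ #{y | eval y (map (Int.castRingHom R) P) = 0} * Fintype.card (R ⧸ m) := by
        simp only [aeval_int_eq_eval_map]
        gcongr
        exact hp.trans (ringChar_le_card _)
    _ ≤ (map φ (map (Int.castRingHom R) P)).totalDegree * Fintype.card R ^ n :=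
        card_zeros_mul_card_le_of_surjective Ideal.Quotient.mk_surjective hne
    _ ≤ P.totalDegree * Fintype.card R ^ n := by
        gcongr
        exact (totalDegree_map_le _ _).trans (totalDegree_map_le _ _)

theorem bound_on_number_of_roots_general
    (n : ℕ) (P : MvPolynomial (Fin n) ℤ) (hdeg : 1 ≤ P.totalDegree) :
    ∃ c C ε : ℝ, 0 < c ∧ 0 < C ∧ ε ∈ Set.Ioo (0 : ℝ) 1 ∧
      ∀ (R : Type*) [CommRing R] [Fintype R] [Nontrivial R],
        C < (Nat.minFac (ringChar R) : ℝ) →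
        ((Finset.univ.filter fun y : Fin n → R => MvPolynomial.aeval y P = 0).card : ℝ)
          ≤ (Fintype.card R : ℝ) ^ (n - 1) +
            c * (Fintype.card R : ℝ) ^ n / (Nat.minFac (ringChar R) : ℝ) ^ ε := by
  obtain ⟨s, hs⟩ := ne_zero_iff.mp fun h : P = 0 => by simp [h] at hdeg
  refine ⟨P.totalDegree, (P.coeff s).natAbs, 1 / 2, by exact_mod_cast hdeg,
    by exact_mod_cast Int.natAbs_pos.mpr hs, ⟨by norm_num, by norm_num⟩, ?_⟩
  intro R _ _ _ hC
  -- The count is in fact at most `deg P · |R|ⁿ / lpf(N)`, so every `ε ∈ (0, 1)` works.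
  have hcount := card_zeros_mul_minFac_ringChar_le (R := R) hs (by exact_mod_cast hC)
  have hp : (1 : ℝ) ≤ (ringChar R).minFac := by exact_mod_cast (ringChar R).minFac_pos
  have hroot : ((ringChar R).minFac : ℝ) ^ (1 / 2 : ℝ) ≤ (ringChar R).minFac :=
    Real.rpow_le_self_of_one_le hp (by norm_num)
  have hbound : (#{y : Fin n → R | aeval y P = 0} : ℝ)
      ≤ P.totalDegree * (Fintype.card R : ℝ) ^ n / ((ringChar R).minFac : ℝ) ^ (1 / 2 : ℝ) := by
    rw [le_div_iff₀ (by positivity)]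
    calc _ ≤ (#{y : Fin n → R | aeval y P = 0} : ℝ) * (ringChar R).minFac := by gcongr
      _ ≤ _ := by exact_mod_cast hcount
  exact hbound.trans (le_add_of_nonneg_left (by positivity))

/-- **Proposition (bound on the number of roots of an integer polynomial over a finite
commutative ring).** Let `P ∈ ℤ[y₁, …, yₙ]` have degree at least one. There exist `c, C > 0`
and `ε ∈ (0,1)`, depending only on `P`, such that for every finite commutative ring `R` of
characteristic `N` with `lpf(N) > C`, the number of `y ∈ Rⁿ` with `P(y) = 0` is at most
`|R|^{n−1} + c·|R|ⁿ/lpf(N)^ε`. -/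
theorem bound_on_number_of_roots
    (n : ℕ) (hn : 1 ≤ n) (P : MvPolynomial (Fin n) ℤ) (hdeg : 1 ≤ P.totalDegree) :
    ∃ c C ε : ℝ, 0 < c ∧ 0 < C ∧ ε ∈ Set.Ioo (0 : ℝ) 1 ∧
      ∀ (R : Type*) [CommRing R] [Fintype R] [Nontrivial R],
        C < (Nat.minFac (ringChar R) : ℝ) →
        ((Finset.univ.filter fun y : Fin n → R => MvPolynomial.aeval y P = 0).card : ℝ)
          ≤ (Fintype.card R : ℝ) ^ (n - 1) +
            c * (Fintype.card R : ℝ) ^ n / (Nat.minFac (ringChar R) : ℝ) ^ ε :=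
  bound_on_number_of_roots_general n P hdeg
end

section
/- Let N be a positive integer and let P, Q ∈ ℤ_N[x] be single-variable polynomials over ℤ/Nℤ, each of degree less than lpf(N). If P(x) = Q(x) in ℤ/Nℤ for every x ∈ ℤ/Nℤ, then P = Q as polynomials, i.e., all corresponding coefficients are equal. -/
private lemma coprime_of_lt_minFac (N k : ℕ) (hk : 0 < k) (hlt : k < N.minFac) :
    Nat.Coprime k N := by
  by_contra hc
  have hg1 : Nat.gcd k N ≠ 1 := hc
  have hgpos : 0 < Nat.gcd k N := Nat.gcd_pos_of_pos_left N hk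
  set p := (Nat.gcd k N).minFac with hp
  have hpp : p.Prime := Nat.minFac_prime hg1
  have hpk : p ∣ k := (Nat.minFac_dvd _).trans (Nat.gcd_dvd_left _ _)
  have hpN : p ∣ N := (Nat.minFac_dvd _).trans (Nat.gcd_dvd_right _ _)
  have h1 : N.minFac ≤ p := Nat.minFac_le_of_dvd hpp.two_le hpN
  have h2 : p ≤ k := Nat.le_of_dvd hk hpk
  omega

private lemma polyzero_aux (N : ℕ) (hN : 0 < N) :
    ∀ n : ℕ, n < N.minFac → ∀ D : Polynomial (ZMod N),
      D.degree ≤ (n : ℕ) → (∀ x : ZMod N, D.eval x = 0) → D = 0 := by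
  haveI : NeZero N := ⟨hN.ne'⟩
  intro n
  induction n with
  | zero =>
    intro _ D hdeg hval
    have hD : D = Polynomial.C (D.coeff 0) := Polynomial.eq_C_of_degree_le_zero (by simpa using hdeg)
    have := hval 0
    rw [hD] at this ⊢
    simpa using this
  | succ n ih =>
    intro hn D hdeg hval
    have Dcoeff : ∀ i, n + 1 < i → D.coeff i = 0 := by
      intro i hi
      apply Polynomial.coeff_eq_zero_of_degree_lt
      exact lt_of_le_of_lt hdeg (by exact_mod_cast hi)
    set E := Polynomial.taylor (1 : ZMod N) D - D with hE
    -- hasseDeriv (n+1) D = C (D.coeff (n+1))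
    have hhd1 : Polynomial.hasseDeriv (n + 1) D = Polynomial.C (D.coeff (n + 1)) := by
      ext j
      rw [Polynomial.hasseDeriv_coeff]
      cases j with
      | zero => simp
      | succ m =>
        rw [Dcoeff (m + 1 + (n + 1)) (by omega)]
        simp
    -- hasseDeriv n D = C (D.coeff n) + C ((n+1) * D.coeff (n+1)) * X
    have hhd0 : Polynomial.hasseDeriv n D
        = Polynomial.C (D.coeff n) + Polynomial.C ((n + 1 : ℕ) * D.coeff (n + 1)) * Polynomial.X := by
      ext j
      rw [Polynomial.hasseDeriv_coeff]
      match j with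
      | 0 => simp
      | 1 =>
        rw [Nat.add_comm 1 n, Nat.choose_succ_self_right]
        simp
      | (m + 2) =>
        rw [Dcoeff (m + 2 + n) (by omega)]
        simp [Polynomial.coeff_X, Polynomial.coeff_C, Polynomial.coeff_one]
    -- E has degree ≤ n
    have hEdeg : E.degree ≤ (n : ℕ) := by
      rw [Polynomial.degree_le_iff_coeff_zero]
      intro m hm
      have hm' : n < m := by exact_mod_cast hm
      rw [hE, Polynomial.coeff_sub, Polynomial.taylor_coeff]
      rcases eq_or_lt_of_le (Nat.succ_le_of_lt hm') with heq | hlt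
      · rw [← heq, hhd1]
        simp
      · have hz : Polynomial.hasseDeriv m D = 0 := by
          ext j
          rw [Polynomial.hasseDeriv_coeff, Dcoeff (j + m) (by omega)]
          simp
        rw [hz, Dcoeff m (by omega)]
        simp
    have hEval : ∀ x : ZMod N, E.eval x = 0 := by
      intro x
      rw [hE, Polynomial.eval_sub, Polynomial.taylor_eval, hval, hval, sub_zero]
    have hE0 : E = 0 := ih (by omega) E hEdeg hEval
    -- compare coefficient n
    have hcoeffn : (Polynomial.taylor (1 : ZMod N) D).coeff n = D.coeff n := by
      have : E.coeff n = 0 := by rw [hE0]; simp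
      rw [hE, Polynomial.coeff_sub, sub_eq_zero] at this
      exact this
    rw [Polynomial.taylor_coeff, hhd0] at hcoeffn
    simp only [Polynomial.eval_add, Polynomial.eval_mul, Polynomial.eval_C, Polynomial.eval_X,
      mul_one] at hcoeffn
    have hkill : ((n + 1 : ℕ) : ZMod N) * D.coeff (n + 1) = 0 := by
      rwa [add_eq_left] at hcoeffn
    have hunit : IsUnit ((n + 1 : ℕ) : ZMod N) := by
      rw [ZMod.isUnit_iff_coprime]
      exact coprime_of_lt_minFac N (n + 1) (by omega) hn
    have hc1 : D.coeff (n + 1) = 0 := by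
      rcases hunit with ⟨u, hu⟩
      have := congrArg (fun z => (↑u⁻¹ : ZMod N) * z) hkill
      simpa [← hu, ← mul_assoc] using this
    have hdeg' : D.degree ≤ (n : ℕ) := by
      rw [Polynomial.degree_le_iff_coeff_zero]
      intro m hm
      have hm' : n < m := by exact_mod_cast hm
      rcases eq_or_lt_of_le (Nat.succ_le_of_lt hm') with heq | hlt
      · rw [← heq]; exact hc1
      · exact Dcoeff m (by omega)
    exact ih (by omega) D hdeg' hval

/-- **Corollary (uniqueness of low-degree polynomial representations mod N).** Let `N` be a
positive integer and let `P, Q ∈ ℤ_N[x]` each have degree less than `lpf(N)`. If `P` and `Q`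
induce the same function on `ℤ/Nℤ`, then `P = Q` as polynomials. -/
theorem polyuniq_single_variable
    (N : ℕ) (hN : 0 < N) (P Q : Polynomial (ZMod N))
    (hP : P.natDegree < Nat.minFac N) (hQ : Q.natDegree < Nat.minFac N)
    (h : ∀ x : ZMod N, P.eval x = Q.eval x) :
    P = Q := by
  have hmf : 1 ≤ N.minFac := Nat.minFac_pos N
  have hdeg : (P - Q).degree ≤ ((N.minFac - 1 : ℕ) : WithBot ℕ) := by
    refine le_trans (Polynomial.degree_sub_le P Q) ?_
    refine max_le ?_ ?_
    · exact le_trans Polynomial.degree_le_natDegree (by exact_mod_cast Nat.le_sub_one_of_lt hP)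
    · exact le_trans Polynomial.degree_le_natDegree (by exact_mod_cast Nat.le_sub_one_of_lt hQ)
  have := polyzero_aux N hN (N.minFac - 1) (by omega) (P - Q) hdeg
    (fun x => by rw [Polynomial.eval_sub, h, sub_self])
  exact sub_eq_zero.mp this
end

section
/- Let n and N be positive integers. Let P(y_1, ..., y_n) and Q(y_1, ..., y_n) ∈ ℤ_N[y_1, ..., y_n] be polynomials, each of (total) degree less than lpf(N), which satisfy P(y_1, ..., y_n) ≡ Q(y_1, ..., y_n) mod N for all y_1, ..., y_n ∈ ℤ_N. Then P = Q as polynomials, i.e., all corresponding coefficients are equal. -/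
lemma isUnit_cast_of_lt_minFac (N : ℕ) {i : ℕ} (hi : 0 < i) (h : i < N.minFac) :
    IsUnit (i : ZMod N) := by
  rw [ZMod.isUnit_iff_coprime]
  by_contra hc
  set d := Nat.gcd i N with hd
  have hd1 : 2 ≤ d := by
    rcases Nat.lt_or_ge d 2 with h2 | h2
    · interval_cases d
      · exact absurd (Nat.eq_zero_of_gcd_eq_zero_left hd.symm) (by omega)
      · exact absurd hd.symm hc
    · exact h2
  have hdN : d ∣ N := Nat.gcd_dvd_right i N
  have : N.minFac ≤ d := Nat.minFac_le_of_dvd hd1 hdN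
  have : d ≤ i := Nat.le_of_dvd hi (Nat.gcd_dvd_left i N)
  omega

lemma univ_poly_zero (N : ℕ) (hN : 0 < N) :
    ∀ d (f : Polynomial (ZMod N)), f.natDegree ≤ d → d < N.minFac →
      (∀ i : ℕ, i ≤ d → f.eval ((i : ℕ) : ZMod N) = 0) → f = 0 := by
  intro d
  induction d with
  | zero =>
    intro f hdeg _ hev
    have hf := Polynomial.eq_C_of_natDegree_le_zero hdeg
    have h0 := hev 0 le_rfl
    rw [hf, Polynomial.eval_C] at h0
    rw [hf, h0, map_zero]
  | succ d ih =>
    intro f hdeg hlt hev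
    have h0 : f.coeff 0 = 0 := by
      have := hev 0 (by omega)
      rwa [Nat.cast_zero, ← Polynomial.coeff_zero_eq_eval_zero] at this
    have hfg : f = Polynomial.X * f.divX := by
      have := Polynomial.X_mul_divX_add f
      rw [h0, map_zero, add_zero] at this
      exact this.symm
    have hgev : ∀ i : ℕ, i ≤ d → (f.divX).eval (((i + 1 : ℕ)) : ZMod N) = 0 := by
      intro i hi
      have hu : IsUnit ((i + 1 : ℕ) : ZMod N) :=
        isUnit_cast_of_lt_minFac N (by omega) (by omega)
      have he := hev (i + 1) (by omega)
      rw [hfg, Polynomial.eval_mul, Polynomial.eval_X] at he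
      exact (hu.mul_right_eq_zero).mp he
    have htay : Polynomial.taylor (1 : ZMod N) f.divX = 0 := by
      apply ih
      · rw [Polynomial.natDegree_taylor, Polynomial.natDegree_divX_eq_natDegree_tsub_one]
        omega
      · omega
      · intro i hi
        rw [Polynomial.taylor_eval]
        have := hgev i hi
        push_cast at this ⊢
        exact this
    have hg : f.divX = 0 := Polynomial.taylor_injective (1 : ZMod N)
      (by rw [htay, map_zero])
    rw [hfg, hg, mul_zero]

lemma mv_poly_zero (N : ℕ) (hN : 0 < N) :
    ∀ n (R : MvPolynomial (Fin n) (ZMod N)), R.totalDegree < N.minFac →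
      (∀ y : Fin n → ZMod N, MvPolynomial.eval y R = 0) → R = 0 := by
  intro n
  induction n with
  | zero =>
    intro R _ hev
    obtain ⟨c, rfl⟩ := MvPolynomial.C_surjective (Fin 0) R
    have := hev (fun _ => 0)
    rw [MvPolynomial.eval_C] at this
    rw [this, map_zero]
  | succ n ih =>
    intro R hdeg hev
    have key : ∀ i : ℕ, (MvPolynomial.finSuccEquiv (ZMod N) n R).coeff i = 0 := by
      intro i
      by_cases hi : (MvPolynomial.finSuccEquiv (ZMod N) n R).coeff i = 0
      · exact hi
      apply ih
      · have := MvPolynomial.totalDegree_coeff_finSuccEquiv_add_le R i hi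
        omega
      · intro z
        set q : Polynomial (ZMod N) :=
          (MvPolynomial.finSuccEquiv (ZMod N) n R).map (MvPolynomial.eval z) with hq
        have hq0 : q = 0 := by
          apply univ_poly_zero N hN (N.minFac - 1)
          · have h1 : q.natDegree ≤ (MvPolynomial.finSuccEquiv (ZMod N) n R).natDegree :=
              Polynomial.natDegree_map_le
            have h2 := MvPolynomial.natDegree_finSuccEquiv R
            have h3 := MvPolynomial.degreeOf_le_totalDegree R 0
            have h4 := Nat.minFac_pos N
            omega
          · have := Nat.minFac_pos N
            omega
          · intro j _
            have := hev (Fin.cons ((j : ℕ) : ZMod N) z)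
            rwa [MvPolynomial.eval_eq_eval_mv_eval'] at this
        have : q.coeff i = 0 := by rw [hq0, Polynomial.coeff_zero]
        rwa [hq, Polynomial.coeff_map] at this
    have : MvPolynomial.finSuccEquiv (ZMod N) n R = 0 := Polynomial.ext fun i => by
      rw [key i, Polynomial.coeff_zero]
    exact (EmbeddingLike.map_eq_zero_iff).mp this

/-- **Lemma (uniqueness of low-degree multivariable polynomial representations mod N).**
Let `n, N` be positive integers and let `P, Q ∈ ℤ_N[y₁, …, yₙ]` each have total degree less
than `lpf(N)`. If `P` and `Q` induce the same function on `(ℤ/Nℤ)ⁿ`, then `P = Q` as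
polynomials. -/
theorem polyuniq_multivariable
    (n N : ℕ) (hn : 0 < n) (hN : 0 < N)
    (P Q : MvPolynomial (Fin n) (ZMod N))
    (hP : P.totalDegree < Nat.minFac N) (hQ : Q.totalDegree < Nat.minFac N)
    (h : ∀ y : Fin n → ZMod N, MvPolynomial.eval y P = MvPolynomial.eval y Q) :
    P = Q := by
  have hsub : P - Q = 0 := by
    apply mv_poly_zero N hN n
    · exact lt_of_le_of_lt (MvPolynomial.totalDegree_sub P Q) (max_lt hP hQ)
    · intro y
      rw [map_sub, h y, sub_self]
  exact sub_eq_zero.mp hsub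
end

section
/- Let n ≥ 1 be an integer and let {P_1, ..., P_m} ⊂ ℤ[y_1, ..., y_n] be an independent family of polynomials. Then there exists C_1 > 0 such that for any positive integer M with lpf(M) > C_1, the reductions of P_1, ..., P_m modulo M are linearly independent over ℤ_M: the only (c_1, ..., c_m) ∈ (ℤ/Mℤ)^m for which c_1P_1 + ⋯ + c_mP_m is a constant polynomial in ℤ_M[y_1, ..., y_n] is c_1 = ⋯ = c_m = 0. -/
open scoped BigOperators
open Matrix

/-- A family of integer polynomials in `n` variables is *independent* if the only integer
linear combination of them that is a constant polynomial is the trivial one. -/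
def IndepFamily {n m : ℕ} (P : Fin m → MvPolynomial (Fin n) ℤ) : Prop :=
  ∀ c : Fin m → ℤ,
    (∃ a : ℤ, ∑ i, MvPolynomial.C (c i) * P i = MvPolynomial.C a) → ∀ i, c i = 0

/-- **Proposition (linear independence over ℤ_M).** Let `P₁, …, Pₘ ⊂ ℤ[y₁, …, yₙ]` be an
independent family. There exists `C₁ > 0` such that for any positive integer `M` with
`lpf(M) > C₁`, the reductions of `P₁, …, Pₘ` modulo `M` are linearly independent over `ℤ_M`:
the only `(c₁, …, cₘ) ∈ (ℤ/Mℤ)ᵐ` for which `c₁P₁ + ⋯ + cₘPₘ` is a constant polynomial is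
`c₁ = ⋯ = cₘ = 0`. -/
theorem linear_independence_mod_M
    (n m : ℕ) (hn : 1 ≤ n) (P : Fin m → MvPolynomial (Fin n) ℤ) (hP : IndepFamily P) :
    ∃ C₁ : ℕ, 0 < C₁ ∧
      ∀ M : ℕ, 0 < M → C₁ < Nat.minFac M →
        ∀ c : Fin m → ZMod M,
          (∃ a : ZMod M,
              ∑ i, MvPolynomial.C (c i) *
                  MvPolynomial.map (Int.castRingHom (ZMod M)) (P i) =
                MvPolynomial.C a) →
          ∀ i, c i = 0 := by
  classical
  -- The finite set of nonzero exponents appearing in the `P i`.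
  set S : Finset ((Fin n) →₀ ℕ) := (Finset.univ.biUnion fun i => (P i).support).erase 0 with hS
  -- Coefficient matrix at nonconstant monomials.
  set A : Matrix S (Fin m) ℤ := fun d i => MvPolynomial.coeff d.1 (P i) with hAdef
  -- Integer kernel of `A` is trivial, by independence.
  have hker : ∀ v : Fin m → ℤ, A *ᵥ v = 0 → v = 0 := by
    intro v hv
    funext i
    refine hP v ⟨MvPolynomial.coeff 0 (∑ i, MvPolynomial.C (v i) * P i), ?_⟩ i
    apply MvPolynomial.ext
    intro d
    rw [MvPolynomial.coeff_C]
    split_ifs with h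
    · rw [h]
    · -- `d ≠ 0` : the coefficient vanishes.
      rw [MvPolynomial.coeff_sum]
      simp only [MvPolynomial.coeff_C_mul]
      by_cases hd : d ∈ S
      · have hvd := congrFun hv ⟨d, hd⟩
        simp only [Matrix.mulVec, dotProduct, Pi.zero_apply] at hvd
        rw [← hvd]
        exact Finset.sum_congr rfl fun j _ => mul_comm _ _
      · refine Finset.sum_eq_zero fun j _ => ?_
        have hdj : d ∉ (P j).support := by
          intro hmem
          exact hd (Finset.mem_erase.mpr ⟨fun h0 => h (h0.symm), Finset.mem_biUnion.mpr
            ⟨j, Finset.mem_univ j, hmem⟩⟩)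
        rw [MvPolynomial.notMem_support_iff.mp hdj, mul_zero]
  -- Gram matrix and its determinant.
  set G : Matrix (Fin m) (Fin m) ℤ := Aᵀ * A with hGdef
  have hG : G.det ≠ 0 := by
    intro h0
    obtain ⟨v, hv0, hv⟩ := Matrix.exists_mulVec_eq_zero_iff.mpr h0
    have h1 := congr_arg (dotProduct v) hv
    rw [dotProduct_zero, hGdef, ← Matrix.mulVec_mulVec, Matrix.dotProduct_mulVec,
      Matrix.vecMul_transpose, dotProduct_self_eq_zero] at h1
    exact hv0 (hker v h1)
  refine ⟨G.det.natAbs, Int.natAbs_pos.mpr hG, ?_⟩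
  intro M hM hlt c ⟨a, ha⟩ i
  set φ := Int.castRingHom (ZMod M) with hφ
  -- the reduced matrix kills `c`
  have hvec : A.map φ *ᵥ c = 0 := by
    funext d
    have hcd := congrArg (MvPolynomial.coeff d.1) ha
    rw [MvPolynomial.coeff_sum] at hcd
    simp only [MvPolynomial.coeff_C_mul, MvPolynomial.coeff_map] at hcd
    have hd0 : (0 : (Fin n) →₀ ℕ) ≠ d.1 := fun h0 => (Finset.mem_erase.mp d.2).1 h0.symm
    rw [MvPolynomial.coeff_C, if_neg hd0] at hcd
    simp only [Matrix.mulVec, dotProduct, Matrix.map_apply, Pi.zero_apply]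
    rw [← hcd]
    exact Finset.sum_congr rfl fun j _ => mul_comm _ _
  -- multiply by `adjugate G * Aᵀ` to conclude `det G • c = 0`
  have hBA : (G.adjugate * Aᵀ) * A = G.det • (1 : Matrix (Fin m) (Fin m) ℤ) := by
    rw [Matrix.mul_assoc, ← hGdef, Matrix.adjugate_mul]
  have hDc : (G.det : ZMod M) • c = 0 := by
    have h2 : ((G.adjugate * Aᵀ).map φ * A.map φ) *ᵥ c = 0 := by
      rw [← Matrix.mulVec_mulVec, hvec, Matrix.mulVec_zero]
    rw [← Matrix.map_mul, hBA] at h2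
    have hmap : (G.det • (1 : Matrix (Fin m) (Fin m) ℤ)).map φ
        = (G.det : ZMod M) • (1 : Matrix (Fin m) (Fin m) (ZMod M)) := by
      ext j k
      simp only [Matrix.map_apply, Matrix.smul_apply, Matrix.one_apply, smul_eq_mul,
        mul_ite, mul_one, mul_zero, apply_ite φ, map_zero]
      split_ifs <;> simp
    rw [hmap, Matrix.smul_mulVec, Matrix.one_mulVec] at h2
    exact h2
  -- `det G` is a unit mod `M`
  have hcop : Nat.Coprime G.det.natAbs M := by
    by_contra hnc
    rw [Nat.Coprime] at hnc
    have hg0 : Nat.gcd G.det.natAbs M ≠ 0 := fun h => by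
      rw [Nat.eq_zero_of_gcd_eq_zero_right h] at hM; exact absurd hM (lt_irrefl 0)
    have hg2 : 2 ≤ Nat.gcd G.det.natAbs M := by omega
    set p := (Nat.gcd G.det.natAbs M).minFac with hp
    have hpp : p.Prime := Nat.minFac_prime (by omega)
    have hpg : p ∣ Nat.gcd G.det.natAbs M := Nat.minFac_dvd _
    have hpD : p ∣ G.det.natAbs := hpg.trans (Nat.gcd_dvd_left _ _)
    have hpM : p ∣ M := hpg.trans (Nat.gcd_dvd_right _ _)
    have h1 : Nat.minFac M ≤ p := Nat.minFac_le_of_dvd hpp.two_le hpM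
    have h2 : p ≤ G.det.natAbs := Nat.le_of_dvd (Int.natAbs_pos.mpr hG) hpD
    omega
  have hunit : IsUnit ((G.det : ZMod M)) := by
    have h1 : IsUnit ((G.det.natAbs : ℕ) : ZMod M) := (ZMod.isUnit_iff_coprime _ _).mpr hcop
    rcases Int.natAbs_eq G.det with h | h
    · rw [h, Int.cast_natCast]; exact h1
    · rw [h, Int.cast_neg, Int.cast_natCast]; exact h1.neg
  have := congrFun hDc i
  rw [Pi.smul_apply, smul_eq_mul, Pi.zero_apply] at this
  exact (hunit.mul_right_eq_zero).mp this
end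

section
/- Let P = {P_1, ..., P_m} ⊂ ℤ[y_1, ..., y_n] be an independent family of polynomials. There exist C', β > 0 such that for any finite commutative ring R with characteristic N satisfying lpf(N) > C' and any subsets A_0, ..., A_m ⊆ R, the number of pairs (x, y) ∈ R × R^n such that (x, x+P_1(y), ..., x+P_m(y)) ∈ A_0 × A_1 × ⋯ × A_m and the set {x, x+P_1(y), ..., x+P_m(y)} has cardinality strictly less than m+1 is at most |R|^{n+1} · lpf(N)^{−β}. -/
open scoped BigOperators Classical

/-!
Index the configuration by `Option (Fin m)`, with `P none = 0`: it degenerates exactly when `y`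
is a zero of a difference `P a - P b` with `a ≠ b`, and independence makes these differences
nonzero integer polynomials. Modulo a maximal ideal of `R` they stay nonzero once the least prime
factor of the characteristic exceeds their coefficients, so Schwartz–Zippel on the residue field
`F`, pulled back along the fibres of `Rⁿ → Fⁿ`, bounds each zero set by
`deg · |R|ⁿ / |F| ≤ deg · |R|ⁿ / lpf(N)`. Summing over pairs gives `O(|R|ⁿ⁺¹ / lpf(N))`, which is
at most `|R|ⁿ⁺¹ · lpf(N)^(-1/2)` once `lpf(N)` is large.
-/

open Finset MvPolynomial

theorem AddMonoidHom.card_filter_comp_mul_card {G H : Type*} [AddGroup G] [AddGroup H]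
    [Fintype G] [Fintype H] (f : G →+ H) (hf : Function.Surjective f) (p : H → Prop) :
    #{g | p (f g)} * Fintype.card H = #{h | p h} * Fintype.card G := by
  set k := #{g | f g = 0}
  have hfiber (h : H) : #{g | f g = h} = k :=
    AddMonoidHom.card_fiber_eq_of_mem_range f (hf h) ⟨0, map_zero f⟩
  have hpre : #{g | p (f g)} = #{h | p h} * k := by
    rw [← sum_const_nat fun h _ => hfiber h]
    convert (sum_card_fiberwise_eq_card_filter univ {h | p h} f).symm using 2
    simp
  have hG : Fintype.card G = Fintype.card H * k := by
    rw [← card_univ (α := H), ← sum_const_nat fun h _ => hfiber h]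
    convert (sum_card_fiberwise_eq_card_filter univ univ f).symm
    simp
  rw [hpre, hG]
  ring

namespace MvPolynomial

variable {n : ℕ}

theorem card_zeros_mul_card_le_s16 {F : Type*} [CommRing F] [IsDomain F] [Fintype F]
    {Q : MvPolynomial (Fin n) F} (hQ : Q ≠ 0) :
    #{y : Fin n → F | eval y Q = 0} * Fintype.card F ≤ Q.totalDegree * Fintype.card F ^ n := by
  have h := schwartz_zippel_totalDegree hQ (univ : Finset F)
  rw [Fintype.piFinset_univ, card_univ] at h
  have hF : (0 : ℚ≥0) < Fintype.card F := by exact_mod_cast Fintype.card_pos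
  rw [div_le_div_iff₀ (by positivity) hF] at h
  exact_mod_cast h

theorem card_zeros_mul_card_le_of_surjective_s16 {A R F : Type*} [CommRing A] [CommRing R]
    [Fintype R] [CommRing F] [IsDomain F] [Fintype F] [Algebra A R] [Algebra A F]
    (π : R →ₐ[A] F) (hπ : Function.Surjective π) {Q : MvPolynomial (Fin n) A}
    (hQ : map (algebraMap A F) Q ≠ 0) :
    #{y : Fin n → R | aeval y Q = 0} * Fintype.card F ≤ Q.totalDegree * Fintype.card R ^ n := by
  have hsub : #{y : Fin n → R | aeval y Q = 0} ≤ #{y : Fin n → R | aeval (π ∘ y) Q = 0} :=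
    card_le_card fun y hy => by
      simp only [mem_filter, mem_univ, true_and] at hy ⊢
      rw [Function.comp_def, ← comp_aeval_apply, hy, map_zero]
  have hlift : #{y : Fin n → R | aeval (π ∘ y) Q = 0} * Fintype.card F ^ n =
      #{z : Fin n → F | aeval z Q = 0} * Fintype.card R ^ n := by
    have := (π.toRingHom.toAddMonoidHom.compLeft (Fin n)).card_filter_comp_mul_card
      hπ.comp_left fun z => aeval z Q = 0
    simp only [Fintype.card_fun, Fintype.card_fin] at this
    exact this
  have hSZ : #{z : Fin n → F | aeval z Q = 0} * Fintype.card F ≤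
      (map (algebraMap A F) Q).totalDegree * Fintype.card F ^ n := by
    simpa only [eval_map, ← aeval_def] using card_zeros_mul_card_le_s16 hQ
  have hdeg : (map (algebraMap A F) Q).totalDegree ≤ Q.totalDegree :=
    Finset.sup_mono (support_map_subset _ _)
  refine Nat.le_of_mul_le_mul_right ?_ (pow_pos (Fintype.card_pos (α := F)) n)
  calc #{y : Fin n → R | aeval y Q = 0} * Fintype.card F * Fintype.card F ^ n
      ≤ #{y : Fin n → R | aeval (π ∘ y) Q = 0} * Fintype.card F ^ n * Fintype.card F := by
        rw [mul_right_comm]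
        exact Nat.mul_le_mul_right _ (Nat.mul_le_mul_right _ hsub)
    _ = #{z : Fin n → F | aeval z Q = 0} * Fintype.card F * Fintype.card R ^ n := by
        rw [hlift, mul_right_comm]
    _ ≤ Q.totalDegree * Fintype.card F ^ n * Fintype.card R ^ n :=
        Nat.mul_le_mul_right _ (hSZ.trans (Nat.mul_le_mul_right _ hdeg))
    _ = Q.totalDegree * Fintype.card R ^ n * Fintype.card F ^ n := by ring

theorem map_intCast_ne_zero_of_natAbs_coeff_lt {σ F : Type*} [CommRing F]
    {Q : MvPolynomial σ ℤ} {s : σ →₀ ℕ} (hs : Q.coeff s ≠ 0)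
    (hlt : (Q.coeff s).natAbs < ringChar F) : map (algebraMap ℤ F) Q ≠ 0 := by
  intro h
  have hcast : ((Q.coeff s : ℤ) : F) = 0 := by
    simpa only [coeff_map, coeff_zero, eq_intCast] using congrArg (coeff s) h
  rw [CharP.intCast_eq_zero_iff F (ringChar F)] at hcast
  exact hs (Int.eq_zero_of_abs_lt_dvd hcast (by rw [Int.abs_eq_natAbs]; exact_mod_cast hlt))

theorem card_zeros_mul_minFac_ringChar_le_s16 {R : Type*} [CommRing R] [Fintype R] [Nontrivial R]
    {Q : MvPolynomial (Fin n) ℤ} {s : Fin n →₀ ℕ} (hs : Q.coeff s ≠ 0)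
    (hlt : (Q.coeff s).natAbs < (ringChar R).minFac) :
    #{y : Fin n → R | aeval y Q = 0} * (ringChar R).minFac ≤
      Q.totalDegree * Fintype.card R ^ n := by
  obtain ⟨I, hI⟩ := Ideal.exists_maximal R
  let F := R ⧸ I
  let : Field F := Ideal.Quotient.field I
  let : Fintype F := Fintype.ofFinite F
  have hp : (ringChar F).Prime := CharP.char_is_prime F (ringChar F)
  have hdvd : ringChar F ∣ ringChar R :=
    CharP.dvd_of_ringHom (Ideal.Quotient.mk I) (ringChar R) (ringChar F)
  have hminFac : (ringChar R).minFac ≤ ringChar F := Nat.minFac_le_of_dvd hp.two_le hdvd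
  have hcard : ringChar F ≤ Fintype.card F := by
    obtain ⟨k, -, hk⟩ := FiniteField.card F (ringChar F)
    exact hk ▸ Nat.le_self_pow k.ne_zero _
  have hQ : map (algebraMap ℤ F) Q ≠ 0 :=
    map_intCast_ne_zero_of_natAbs_coeff_lt hs (hlt.trans_le hminFac)
  calc #{y : Fin n → R | aeval y Q = 0} * (ringChar R).minFac
      ≤ #{y : Fin n → R | aeval y Q = 0} * Fintype.card F :=
        Nat.mul_le_mul_left _ (hminFac.trans hcard)
    _ ≤ Q.totalDegree * Fintype.card R ^ n :=
      card_zeros_mul_card_le_of_surjective_s16 (Ideal.Quotient.mkₐ ℤ I)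
        (Ideal.Quotient.mkₐ_surjective ℤ I) hQ

end MvPolynomial

theorem Real.le_mul_rpow_neg_half_of_mul_le {s b x q : ℝ} (hx : 0 ≤ x) (hq : 0 < q)
    (hbq : b ^ 2 ≤ q) (h : s * q ≤ b * x) : s ≤ x * q ^ (-(1 / 2 : ℝ)) := by
  have hsqrt : 0 < √q := Real.sqrt_pos.2 hq
  have hbs : b ≤ √q := Real.le_sqrt_of_sq_le hbq
  rw [Real.rpow_neg hq.le, ← Real.sqrt_eq_rpow, ← div_eq_mul_inv, le_div_iff₀ hsqrt]
  refine le_of_mul_le_mul_right ?_ hsqrt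
  calc s * √q * √q = s * q := by rw [mul_assoc, Real.mul_self_sqrt hq.le]
    _ ≤ b * x := h
    _ ≤ x * √q := by rw [mul_comm]; gcongr

theorem exists_ne_of_card_insert_image_lt {m : ℕ} {R : Type*} [AddLeftCancelMonoid R]
    (x : R) (v : Fin m → R) (h : #(insert x (univ.image fun i => x + v i)) < m + 1) :
    ∃ a b : Option (Fin m), a ≠ b ∧ a.elim 0 v = b.elim 0 v := by
  by_contra! hdistinct
  have hinj : Function.Injective fun a : Option (Fin m) => x + a.elim 0 v :=
    fun a b hab => by_contra fun hne => hdistinct a b hne (add_left_cancel hab)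
  have himage : insert x (univ.image fun i => x + v i) =
      univ.image fun a : Option (Fin m) => x + a.elim 0 v := by
    ext r
    simp [Option.exists, eq_comm]
  rw [himage, card_image_of_injective _ hinj, card_univ, Fintype.card_option,
    Fintype.card_fin] at h
  exact lt_irrefl _ h

section Configurations

variable {n m : ℕ} (P : Fin m → MvPolynomial (Fin n) ℤ)

noncomputable def configDiff (p : Option (Fin m) × Option (Fin m)) : MvPolynomial (Fin n) ℤ :=
  p.1.elim 0 P - p.2.elim 0 P

theorem aeval_configDiff_eq_zero_iff {R : Type*} [CommRing R] (y : Fin n → R)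
    (p : Option (Fin m) × Option (Fin m)) :
    aeval y (configDiff P p) = 0 ↔
      p.1.elim 0 (fun i => aeval y (P i)) = p.2.elim 0 (fun i => aeval y (P i)) := by
  rw [configDiff, map_sub, sub_eq_zero]
  obtain ⟨a | a, b | b⟩ := p <;> simp

variable {P}

theorem IndepFamily.configDiff_ne_zero (hP : IndepFamily P) {p : Option (Fin m) × Option (Fin m)}
    (hp : p.1 ≠ p.2) : configDiff P p ≠ 0 := by
  have hsum (a : Option (Fin m)) : ∑ i, C (if some i = a then 1 else 0) * P i = a.elim 0 P := by
    cases a <;> simp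
  set c : Fin m → ℤ := fun i => (if some i = p.1 then 1 else 0) - (if some i = p.2 then 1 else 0)
  intro h
  have hc := hP c ⟨0, by simp only [c, map_sub, sub_mul, sum_sub_distrib, hsum, map_zero]; exact h⟩
  obtain ⟨a, b⟩ := p
  cases a with
  | none =>
    obtain ⟨j, rfl⟩ := Option.ne_none_iff_exists'.mp hp.symm
    simpa [c] using hc j
  | some i => simpa [c, hp] using hc i

variable (P) in
noncomputable def configDegree : ℕ :=
  univ.sup fun p => (configDiff P p).totalDegree

variable (P) in
noncomputable def configHeight : ℕ :=
  univ.sup fun p => (configDiff P p).support.sup fun s => ((configDiff P p).coeff s).natAbs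

theorem card_zeros_configDiff_mul_minFac_le (hP : IndepFamily P) (R : Type*) [CommRing R]
    [Fintype R] [Nontrivial R] (hR : configHeight P < (ringChar R).minFac)
    {p : Option (Fin m) × Option (Fin m)} (hp : p.1 ≠ p.2) :
    #{y : Fin n → R | aeval y (configDiff P p) = 0} * (ringChar R).minFac ≤
      configDegree P * Fintype.card R ^ n := by
  obtain ⟨s, hs⟩ := ne_zero_iff.mp (hP.configDiff_ne_zero hp)
  have hheight : ((configDiff P p).coeff s).natAbs ≤ configHeight P :=
    le_sup_of_le (mem_univ p)
      (le_sup (f := fun s => ((configDiff P p).coeff s).natAbs) (mem_support_iff.mpr hs))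
  have hdegree : (configDiff P p).totalDegree ≤ configDegree P :=
    le_sup (f := fun p => (configDiff P p).totalDegree) (mem_univ p)
  exact (card_zeros_mul_minFac_ringChar_le_s16 hs (hheight.trans_lt hR)).trans
    (Nat.mul_le_mul_right _ hdegree)

theorem card_degenerate_mul_minFac_le (hP : IndepFamily P) (R : Type*) [CommRing R] [Fintype R]
    [Nontrivial R] (hR : configHeight P < (ringChar R).minFac) :
    #{p : R × (Fin n → R) | #(insert p.1 (univ.image fun i => p.1 + aeval p.2 (P i))) < m + 1}
        * (ringChar R).minFac
      ≤ (m + 1) ^ 2 * configDegree P * Fintype.card R ^ (n + 1) := by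
  set q := (ringChar R).minFac
  set Z : Option (Fin m) × Option (Fin m) → Finset (Fin n → R) :=
    fun p => {y | aeval y (configDiff P p) = 0}
  have hsub : ({p : R × (Fin n → R) |
      #(insert p.1 (univ.image fun i => p.1 + aeval p.2 (P i))) < m + 1} : Finset _) ⊆
      univ ×ˢ (univ : Finset _).offDiag.biUnion Z := by
    rintro ⟨x, y⟩ h
    obtain ⟨a, b, hab, heq⟩ := exists_ne_of_card_insert_image_lt x _ (mem_filter.mp h).2
    simp only [mem_product, mem_univ, mem_biUnion, mem_offDiag, true_and]
    exact ⟨(a, b), hab, mem_filter.mpr ⟨mem_univ y, (aeval_configDiff_eq_zero_iff P y _).2 heq⟩⟩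
  have hoffDiag : #((univ : Finset (Option (Fin m))).offDiag) ≤ (m + 1) ^ 2 :=
    (card_le_univ _).trans_eq (by rw [Fintype.card_prod, Fintype.card_option, Fintype.card_fin, sq])
  calc _ ≤ #(univ ×ˢ univ.offDiag.biUnion Z) * q := Nat.mul_le_mul_right _ (card_le_card hsub)
    _ ≤ Fintype.card R * (∑ p ∈ univ.offDiag, #(Z p)) * q := by
        rw [card_product, card_univ]
        exact Nat.mul_le_mul_right _ (Nat.mul_le_mul_left _ card_biUnion_le)
    _ = Fintype.card R * ∑ p ∈ univ.offDiag, #(Z p) * q := by rw [mul_assoc, sum_mul]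
    _ ≤ Fintype.card R * ∑ p ∈ univ.offDiag, configDegree P * Fintype.card R ^ n :=
        Nat.mul_le_mul_left _ (sum_le_sum fun p hp =>
          card_zeros_configDiff_mul_minFac_le hP R hR (mem_offDiag.mp hp).2.2)
    _ ≤ Fintype.card R * ((m + 1) ^ 2 * (configDegree P * Fintype.card R ^ n)) := by
        rw [sum_const, smul_eq_mul]
        exact Nat.mul_le_mul_left _ (Nat.mul_le_mul_right _ hoffDiag)
    _ = (m + 1) ^ 2 * configDegree P * Fintype.card R ^ (n + 1) := by ring

end Configurations

/-- **Proposition (bound on the number of degenerated configurations).** For an independent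
family `P₁, …, Pₘ` there exist `C', β > 0` such that for any finite commutative ring `R` of
characteristic `N` with `lpf(N) > C'` and subsets `A₀, …, Aₘ ⊆ R`, the number of pairs
`(x,y)` giving a degenerated configuration `(x, x+P₁(y), …, x+Pₘ(y)) ∈ A₀ × ⋯ × Aₘ` is at
most `|R|^{n+1}·lpf(N)^{−β}`. -/
theorem degenerated_configuration_count
    (n m : ℕ) (P : Fin m → MvPolynomial (Fin n) ℤ) (hP : IndepFamily P) :
    ∃ C' β : ℝ, 0 < C' ∧ 0 < β ∧
      ∀ (R : Type*) [CommRing R] [Fintype R] [Nontrivial R],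
        C' < (Nat.minFac (ringChar R) : ℝ) →
        ∀ A : Fin (m + 1) → Finset R,
          ((Finset.univ.filter fun p : R × (Fin n → R) =>
              p.1 ∈ A 0 ∧
              (∀ i : Fin m, p.1 + MvPolynomial.aeval p.2 (P i) ∈ A i.succ) ∧
              (insert p.1 ((Finset.univ : Finset (Fin m)).image
                  fun i => p.1 + MvPolynomial.aeval p.2 (P i))).card < m + 1).card : ℝ)
            ≤ (Fintype.card R : ℝ) ^ (n + 1) * (Nat.minFac (ringChar R) : ℝ) ^ (-β) := by
  set E := (m + 1) ^ 2 * configDegree P + configHeight P + 1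
  refine ⟨(E ^ 2 : ℕ), 1 / 2, by positivity, by norm_num, fun R _ _ _ hR A => ?_⟩
  have hE : E ^ 2 < (ringChar R).minFac := by exact_mod_cast hR
  have hEsq : E ≤ E ^ 2 := Nat.le_self_pow two_ne_zero E
  have hcount := card_degenerate_mul_minFac_le hP R (by omega)
  refine Real.le_mul_rpow_neg_half_of_mul_le (b := ((m + 1) ^ 2 * configDegree P : ℕ))
    (by positivity) (by exact_mod_cast (ringChar R).minFac_pos) ?_ ?_
  · exact_mod_cast (Nat.pow_le_pow_left (by omega) 2).trans hE.le
  · exact_mod_cast (Nat.mul_le_mul_right _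
      (card_le_card (monotone_filter_right univ fun _ _ (h : _ ∧ _ ∧ _) => h.2.2))).trans hcount
end

section
/- Let d and n be positive integers, let R be a finite commutative ring with characteristic N, and let f_0, f_1, ..., f_d : R → ℂ be 1-bounded functions. For each i ∈ {1, ..., d}, let a^{(i)} = (a^{(i)}_1, ..., a^{(i)}_n) be an n-tuple of elements of ℤ/Nℤ, viewed in R via the canonical map, such that every component a^{(i)}_k is a unit of R and, for all i ≠ j, every component of a^{(i)} − a^{(j)} is a unit of R. Then | (1/|R|^{n+1}) · ∑_{x ∈ R, y ∈ R^n} f_0(x) · ∏_{i=1}^{d} f_i(x + ∑_{k=1}^{n} a^{(i)}_k · y_k) | ≤ ‖f_d‖_{U^d}. -/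
open scoped BigOperators Classical

/-- Multiplicative discrete derivative: `Δ_h f (x) = f(x+h) · conj (f x)`. -/
def mDeriv {R : Type*} [Add R] (h : R) (f : R → ℂ) : R → ℂ :=
  fun x => f (x + h) * (starRingEnd ℂ) (f x)

/-- Iterated multiplicative discrete derivative `Δ_{h₁,…,h_s} f`. -/
def mDerivIter {R : Type*} [Add R] : (s : ℕ) → (Fin s → R) → (R → ℂ) → (R → ℂ)
  | 0, _, f => f
  | s + 1, h, f => mDeriv (h 0) (mDerivIter s (fun i => h i.succ) f)

/-- The Gowers uniformity (semi)norm `‖f‖_{U^s}` on a finite additive group `R`, defined by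
`‖f‖_{U^s}^{2^s} = (1/|R|^{s+1}) ∑_{x,h₁,…,h_s} Δ_{h₁,…,h_s} f(x)`. -/
noncomputable def gowersNorm (R : Type*) [AddCommGroup R] [Fintype R] (s : ℕ)
    (f : R → ℂ) : ℝ :=
  (((1 : ℂ) / (Fintype.card R : ℂ) ^ (s + 1)) *
      ∑ x : R, ∑ h : Fin s → R, mDerivIter s h f x).re ^ ((1 : ℝ) / 2 ^ s)

/-!
Set `a⁽⁰⁾ = 0` and consider `Λ = 𝔼_{x,y} ∏ᵢ fᵢ(x + a⁽ⁱ⁾·y)` for any tuples whose pairwise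
differences have a unit `k`-th coordinate. Translating `x` by `a⁽⁰⁾·y` gives `Λ = 𝔼ₓ f₀(x) G(x)`
with `G(x) = 𝔼_y ∏_{i ≥ 1} fᵢ(x + bᵢ·y)` and `bᵢ = a⁽ⁱ⁾ - a⁽⁰⁾`. Cauchy–Schwarz in `x` and the
substitution `y' = y + h` give `|Λ|² ≤ 𝔼_h |Λ_h|`, where `Λ_h` is the average of the same kind for
the functions `conj (Δ_{bᵢ·h} fᵢ)` along the tuples `bᵢ`. Induction and the power-mean inequality
then give `|Λ|^{2^d} ≤ 𝔼_h ‖Δ_{b_d·h} f_d‖_{U^{d-1}}^{2^{d-1}}`, and since `(b_d)_k` is a unit,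
`b_d·h` is uniformly distributed on `R`, which turns the right side into `‖f_d‖_{U^d}^{2^d}`.
For `d = 1` the average factors as `𝔼 f₀ · 𝔼 f₁`.
-/

open Finset ComplexConjugate

section Derivatives

lemma mDeriv_comm {R : Type*} [AddCommSemigroup R] (a b : R) (f : R → ℂ) :
    mDeriv a (mDeriv b f) = mDeriv b (mDeriv a f) := by
  funext x
  simp only [mDeriv, map_mul, Complex.conj_conj, add_right_comm]
  ring

lemma mDerivIter_mDeriv {R : Type*} [AddCommSemigroup R] (s : ℕ) (h : Fin s → R) (t : R)
    (f : R → ℂ) : mDerivIter s h (mDeriv t f) = mDeriv t (mDerivIter s h f) := by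
  induction s with
  | zero => rfl
  | succ s ih => rw [mDerivIter, mDerivIter, ih, mDeriv_comm]

variable {R : Type*} [Add R]

lemma mDerivIter_conj (s : ℕ) (h : Fin s → R) (f : R → ℂ) :
    mDerivIter s h (fun x => conj (f x)) = fun x => conj (mDerivIter s h f x) := by
  induction s with
  | zero => rfl
  | succ s ih =>
    funext x
    simp only [mDerivIter, ih, mDeriv, map_mul]

lemma norm_mDeriv_le_one {f : R → ℂ} (hf : ∀ x, ‖f x‖ ≤ 1) (t x : R) : ‖mDeriv t f x‖ ≤ 1 := by
  rw [mDeriv, norm_mul, Complex.norm_conj]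
  exact mul_le_one₀ (hf _) (norm_nonneg _) (hf x)

end Derivatives

section Averages

variable {ι M : Type*} [Fintype ι]

lemma pow_expect_le_expect_pow [Nonempty ι] {X : ι → ℝ} (hX : ∀ i, 0 ≤ X i) (p : ℕ) :
    (𝔼 i, X i) ^ p ≤ 𝔼 i, X i ^ p := by
  simp only [Fintype.expect_eq_sum_div_card, div_eq_inv_mul, mul_sum]
  simpa using (convexOn_pow p).map_sum_le (t := univ) (w := fun _ => (Fintype.card ι : ℝ)⁻¹)
    (fun _ _ => by positivity) (by simp [card_univ]) fun i _ => Set.mem_Ici.2 (hX i)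

lemma expect_expect_eq_one_div_card_pow_mul_sum_sum (s : ℕ) (F : ι → (Fin s → ι) → ℂ) :
    𝔼 x, 𝔼 h : Fin s → ι, F x h = 1 / (Fintype.card ι : ℂ) ^ (s + 1) * ∑ x, ∑ h, F x h := by
  simp only [Fintype.expect_eq_sum_div_card, ← sum_div, Fintype.card_fun, Fintype.card_fin]
  push_cast
  ring

variable [AddCommMonoid M] [Module ℚ≥0 M]

lemma expect_comp_add_left {G : Type*} [AddGroup G] [Fintype G] (a : G) (g : G → M) :
    𝔼 x, g (a + x) = 𝔼 x, g x :=
  Fintype.expect_equiv (Equiv.addLeft a) _ _ fun _ => rfl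

lemma expect_comp_add_right {G : Type*} [AddGroup G] [Fintype G] (a : G) (g : G → M) :
    𝔼 x, g (x + a) = 𝔼 x, g x :=
  Fintype.expect_equiv (Equiv.addRight a) _ _ fun _ => rfl

end Averages

section GowersAverage

variable {R : Type*} [AddCommGroup R] [Fintype R]

noncomputable def gowersAvg (s : ℕ) (f : R → ℂ) : ℂ :=
  𝔼 x, 𝔼 h : Fin s → R, mDerivIter s h f x

lemma gowersNorm_eq_re_gowersAvg_rpow (s : ℕ) (f : R → ℂ) :
    gowersNorm R s f = (gowersAvg s f).re ^ ((1 : ℝ) / 2 ^ s) := by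
  rw [gowersNorm, gowersAvg, expect_expect_eq_one_div_card_pow_mul_sum_sum]

lemma gowersAvg_succ (s : ℕ) (f : R → ℂ) :
    gowersAvg (s + 1) f = 𝔼 t, gowersAvg s (mDeriv t f) := by
  have split (x : R) : 𝔼 h : Fin (s + 1) → R, mDerivIter (s + 1) h f x =
      𝔼 t, 𝔼 h : Fin s → R, mDerivIter s h (mDeriv t f) x := by
    rw [← Fintype.expect_equiv (Fin.consEquiv fun _ => R)
      (fun p => mDerivIter s p.2 (mDeriv p.1 f) x) _ fun _ => by rw [mDerivIter_mDeriv]; rfl,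
      ← univ_product_univ]
    exact expect_product' _ _ fun t h => mDerivIter s h (mDeriv t f) x
  simp only [gowersAvg, split]
  exact expect_comm _ _ _

lemma gowersAvg_conj (s : ℕ) (f : R → ℂ) :
    gowersAvg s (fun x => conj (f x)) = conj (gowersAvg s f) := by
  simp only [gowersAvg, mDerivIter_conj, map_expect]

lemma gowersAvg_one (f : R → ℂ) : gowersAvg 1 f = (‖𝔼 x, f x‖ : ℂ) ^ 2 := by
  rw [gowersAvg_succ, ← Complex.mul_conj', map_expect, expect_mul_expect, expect_comm]
  simp only [gowersAvg, mDerivIter, mDeriv, Fintype.expect_const]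
  rw [expect_comm]
  exact expect_congr rfl fun x _ => expect_comp_add_left x fun t => f t * conj (f x)

end GowersAverage

section LinearAverage

variable {R : Type*} [Ring R] [Fintype R] {n m : ℕ}

lemma expect_comp_dotProduct {M : Type*} [AddCommMonoid M] [Module ℚ≥0 M]
    {c : Fin n → R} {k : Fin n} (hc : IsUnit (c k)) (g : R → M) :
    𝔼 y : Fin n → R, g (c ⬝ᵥ y) = 𝔼 t, g t := by
  obtain ⟨u, hu⟩ := hc
  -- moving `y` by `u⁻¹ t` in the `k`-th coordinate moves `c ⬝ᵥ y` by `t`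
  have shift (t : R) : 𝔼 y : Fin n → R, g (c ⬝ᵥ y + t) = 𝔼 y : Fin n → R, g (c ⬝ᵥ y) := by
    rw [← expect_comp_add_right (Pi.single k (↑u⁻¹ * t)) fun y => g (c ⬝ᵥ y)]
    simp [dotProduct_add, dotProduct_single, ← hu]
  calc 𝔼 y, g (c ⬝ᵥ y) = 𝔼 t, 𝔼 y, g (c ⬝ᵥ y + t) := by simp only [shift, Fintype.expect_const]
    _ = 𝔼 y, 𝔼 t, g (c ⬝ᵥ y + t) := expect_comm ..
    _ = 𝔼 t, g t := by simp only [expect_comp_add_left, Fintype.expect_const]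

noncomputable def linearAvg (c : Fin m → Fin n → R) (f : Fin m → R → ℂ) : ℂ :=
  𝔼 x, 𝔼 y : Fin n → R, ∏ i, f i (x + c i ⬝ᵥ y)

lemma linearAvg_eq_expect_mul (c : Fin (m + 1) → Fin n → R) (f : Fin (m + 1) → R → ℂ) :
    linearAvg c f =
      𝔼 x, f 0 x * 𝔼 y : Fin n → R, ∏ i : Fin m, f i.succ (x + (c i.succ - c 0) ⬝ᵥ y) := by
  simp only [linearAvg, mul_expect]
  rw [expect_comm, eq_comm, expect_comm]
  refine expect_congr rfl fun y _ => ?_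
  rw [← expect_comp_add_right (c 0 ⬝ᵥ y)]
  refine expect_congr rfl fun x _ => ?_
  simp only [Fin.prod_univ_succ, sub_dotProduct, add_add_sub_cancel]

lemma expect_mul_conj_expect_prod (b : Fin m → Fin n → R) (F : Fin m → R → ℂ) (x : R) :
    (𝔼 y : Fin n → R, ∏ i, F i (x + b i ⬝ᵥ y)) * conj (𝔼 y : Fin n → R, ∏ i, F i (x + b i ⬝ᵥ y)) =
      𝔼 y : Fin n → R, 𝔼 h : Fin n → R, ∏ i, conj (mDeriv (b i ⬝ᵥ h) (F i) (x + b i ⬝ᵥ y)) := by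
  rw [map_expect, expect_mul_expect]
  refine expect_congr rfl fun y _ => ?_
  rw [← expect_comp_add_left y]
  refine expect_congr rfl fun h _ => ?_
  simp only [map_prod, ← prod_mul_distrib, mDeriv, map_mul, Complex.conj_conj, dotProduct_add,
    add_assoc, mul_comm]

lemma expect_norm_sq_expect_prod (b : Fin m → Fin n → R) (F : Fin m → R → ℂ) :
    𝔼 x, ‖𝔼 y : Fin n → R, ∏ i, F i (x + b i ⬝ᵥ y)‖ ^ 2 =
      (𝔼 h : Fin n → R, linearAvg b fun i x => conj (mDeriv (b i ⬝ᵥ h) (F i) x)).re := by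
  calc 𝔼 x, ‖𝔼 y : Fin n → R, ∏ i, F i (x + b i ⬝ᵥ y)‖ ^ 2
      = (𝔼 x, (𝔼 y : Fin n → R, ∏ i, F i (x + b i ⬝ᵥ y)) *
          conj (𝔼 y : Fin n → R, ∏ i, F i (x + b i ⬝ᵥ y))).re := by
        simp_rw [Complex.mul_conj', Complex.re_expect, ← Complex.ofReal_pow, Complex.ofReal_re]
    _ = (𝔼 x, 𝔼 y : Fin n → R, 𝔼 h : Fin n → R,
          ∏ i, conj (mDeriv (b i ⬝ᵥ h) (F i) (x + b i ⬝ᵥ y))).re := by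
        simp_rw [expect_mul_conj_expect_prod]
    _ = _ := by
        simp only [linearAvg]
        rw [expect_comm (univ : Finset (Fin n → R)) (univ : Finset R)]
        exact congrArg _ (expect_congr rfl fun x _ => expect_comm ..)

lemma norm_expect_mul_expect_prod_sq_le {f₀ : R → ℂ} (hf₀ : ∀ x, ‖f₀ x‖ ≤ 1)
    (b : Fin m → Fin n → R) (F : Fin m → R → ℂ) :
    ‖𝔼 x, f₀ x * 𝔼 y : Fin n → R, ∏ i, F i (x + b i ⬝ᵥ y)‖ ^ 2 ≤
      𝔼 h : Fin n → R, ‖linearAvg b fun i x => conj (mDeriv (b i ⬝ᵥ h) (F i) x)‖ := by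
  calc ‖𝔼 x, f₀ x * 𝔼 y : Fin n → R, ∏ i, F i (x + b i ⬝ᵥ y)‖ ^ 2
      ≤ (𝔼 x, ‖𝔼 y : Fin n → R, ∏ i, F i (x + b i ⬝ᵥ y)‖) ^ 2 := by
        refine pow_le_pow_left₀ (norm_nonneg _) ((RCLike.norm_expect_le (K := ℝ)).trans ?_) 2
        refine expect_le_expect fun x _ => ?_
        rw [norm_mul]
        exact mul_le_of_le_one_left (norm_nonneg _) (hf₀ x)
    _ ≤ 𝔼 x, ‖𝔼 y : Fin n → R, ∏ i, F i (x + b i ⬝ᵥ y)‖ ^ 2 :=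
        pow_expect_le_expect_pow (fun _ => norm_nonneg _) 2
    _ = (𝔼 h : Fin n → R, linearAvg b fun i x => conj (mDeriv (b i ⬝ᵥ h) (F i) x)).re :=
        expect_norm_sq_expect_prod b F
    _ ≤ _ := (Complex.re_le_norm _).trans (RCLike.norm_expect_le (K := ℝ))

lemma norm_linearAvg_le_norm_expect (c : Fin 2 → Fin n → R) (f : Fin 2 → R → ℂ)
    (hf₀ : ∀ x, ‖f 0 x‖ ≤ 1) {k : Fin n} (hc : IsUnit (c 1 k - c 0 k)) :
    ‖linearAvg c f‖ ≤ ‖𝔼 x, f 1 x‖ := by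
  have inner (x : R) :
      𝔼 y : Fin n → R, ∏ i : Fin 1, f i.succ (x + (c i.succ - c 0) ⬝ᵥ y) = 𝔼 t, f 1 t := by
    simp only [Fin.prod_univ_one, Fin.succ_zero_eq_one]
    exact (expect_comp_dotProduct (c := c 1 - c 0) hc fun t => f 1 (x + t)).trans
      (expect_comp_add_left x (f 1))
  rw [linearAvg_eq_expect_mul]
  simp only [inner, ← expect_mul, norm_mul]
  exact mul_le_of_le_one_left (norm_nonneg _)
    ((RCLike.norm_expect_le (K := ℝ)).trans (expect_le univ_nonempty fun x _ => hf₀ x))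

theorem norm_linearAvg_pow_le_re_gowersAvg {m : ℕ} (hm : 1 ≤ m) {k : Fin n}
    (c : Fin (m + 1) → Fin n → R) (f : Fin (m + 1) → R → ℂ) (hf : ∀ i x, ‖f i x‖ ≤ 1)
    (hc : ∀ i j, i ≠ j → IsUnit (c i k - c j k)) :
    ‖linearAvg c f‖ ^ 2 ^ m ≤ (gowersAvg m (f (Fin.last m))).re := by
  induction m, hm using Nat.le_induction with
  | base =>
    calc ‖linearAvg c f‖ ^ 2 ^ 1 ≤ ‖𝔼 x, f 1 x‖ ^ 2 :=
          pow_le_pow_left₀ (norm_nonneg _)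
            (norm_linearAvg_le_norm_expect c f (hf 0) (hc 1 0 (by decide))) 2
      _ = (gowersAvg 1 (f (Fin.last 1))).re := by
          rw [gowersAvg_one, ← Complex.ofReal_pow, Complex.ofReal_re]
          rfl
  | succ m hm ih =>
    set b : Fin (m + 1) → Fin n → R := fun i => c i.succ - c 0
    set F := f (Fin.last (m + 1))
    have step (h : Fin n → R) :
        ‖linearAvg b fun i x => conj (mDeriv (b i ⬝ᵥ h) (f i.succ) x)‖ ^ 2 ^ m ≤
          (gowersAvg m (mDeriv (b (Fin.last m) ⬝ᵥ h) F)).re := by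
      refine (ih b _ (fun i x => ?_) fun i j hij => ?_).trans_eq ?_
      · rw [Complex.norm_conj]
        exact norm_mDeriv_le_one (hf _) _ _
      · simpa [b] using hc i.succ j.succ (Fin.succ_injective _ |>.ne hij)
      · rw [gowersAvg_conj, Complex.conj_re, Fin.succ_last]
    calc ‖linearAvg c f‖ ^ 2 ^ (m + 1) = (‖linearAvg c f‖ ^ 2) ^ 2 ^ m := by
          rw [pow_succ, pow_mul']
      _ ≤ (𝔼 h : Fin n → R, ‖linearAvg b fun i x => conj (mDeriv (b i ⬝ᵥ h) (f i.succ) x)‖)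
            ^ 2 ^ m := by
          gcongr
          rw [linearAvg_eq_expect_mul]
          exact norm_expect_mul_expect_prod_sq_le (hf 0) b _
      _ ≤ 𝔼 h : Fin n → R,
            ‖linearAvg b fun i x => conj (mDeriv (b i ⬝ᵥ h) (f i.succ) x)‖ ^ 2 ^ m :=
          pow_expect_le_expect_pow (fun _ => norm_nonneg _) _
      _ ≤ 𝔼 h : Fin n → R, (gowersAvg m (mDeriv (b (Fin.last m) ⬝ᵥ h) F)).re :=
          expect_le_expect fun h _ => step h
      _ = (gowersAvg (m + 1) F).re := by
          rw [← Complex.re_expect, gowersAvg_succ,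
            expect_comp_dotProduct (hc _ 0 (Fin.succ_ne_zero _)) fun t => gowersAvg m (mDeriv t F)]

end LinearAverage

theorem gowers_controls_linear_averages_general
    (d n : ℕ) (hd : 0 < d) (hn : 0 < n)
    (R : Type*) [CommRing R] [Fintype R]
    (f : Fin (d + 1) → R → ℂ) (hf : ∀ i x, ‖f i x‖ ≤ 1)
    (a : Fin d → Fin n → ZMod (ringChar R))
    (ha : ∀ i k, IsUnit ((ZMod.castHom (dvd_refl (ringChar R)) R) (a i k)))
    (ha' : ∀ i j, i ≠ j →
      ∀ k, IsUnit ((ZMod.castHom (dvd_refl (ringChar R)) R) (a i k - a j k))) :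
    ‖(1 / (Fintype.card R : ℂ) ^ (n + 1)) *
        ∑ x : R, ∑ y : Fin n → R,
          f 0 x * ∏ i : Fin d,
            f i.succ (x + ∑ k : Fin n,
              (ZMod.castHom (dvd_refl (ringChar R)) R) (a i k) * y k)‖
      ≤ gowersNorm R d (f (Fin.last d)) := by
  set c : Fin (d + 1) → Fin n → R :=
    Fin.cons 0 fun i k => ZMod.castHom (dvd_refl (ringChar R)) R (a i k)
  have hc (i j : Fin (d + 1)) (hij : i ≠ j) : IsUnit (c i ⟨0, hn⟩ - c j ⟨0, hn⟩) := by
    rcases Fin.eq_zero_or_eq_succ i with rfl | ⟨i, rfl⟩ <;>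
      rcases Fin.eq_zero_or_eq_succ j with rfl | ⟨j, rfl⟩
    · exact absurd rfl hij
    · simpa [c] using (ha j _).neg
    · simpa [c] using ha i _
    · simpa [c] using ha' i j (Fin.succ_injective _ |>.ne_iff.1 hij) _
  have hLHS : (1 / (Fintype.card R : ℂ) ^ (n + 1)) *
      ∑ x : R, ∑ y : Fin n → R, f 0 x * ∏ i : Fin d, f i.succ (x + ∑ k : Fin n,
        (ZMod.castHom (dvd_refl (ringChar R)) R) (a i k) * y k) = linearAvg c f := by
    simp [linearAvg, expect_expect_eq_one_div_card_pow_mul_sum_sum, Fin.prod_univ_succ, c,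
      dotProduct]
  have key := norm_linearAvg_pow_le_re_gowersAvg hd c f hf hc
  rw [hLHS, gowersNorm_eq_re_gowersAvg_rpow, one_div,
    Real.le_rpow_inv_iff_of_pos (norm_nonneg _) ((by positivity : (0 : ℝ) ≤ _).trans key)
      (by positivity)]
  exact_mod_cast key

/-- **Lemma (Gowers norms control invertible linear averages).** Let `R` be a finite
commutative ring of characteristic `N`, and for `i = 1, …, d` let `a⁽ⁱ⁾ ∈ (ℤ/Nℤ)ⁿ` be tuples,
viewed in `R` via the canonical map, whose components are units and whose pairwise differences
have unit components. Then the linear average of 1-bounded `f₀, …, f_d` along these tuples is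
bounded by `‖f_d‖_{U^d}`. -/
theorem gowers_controls_linear_averages
    (d n : ℕ) (hd : 0 < d) (hn : 0 < n)
    (R : Type*) [CommRing R] [Fintype R] [Nontrivial R]
    (f : Fin (d + 1) → R → ℂ) (hf : ∀ i x, ‖f i x‖ ≤ 1)
    (a : Fin d → Fin n → ZMod (ringChar R))
    (ha : ∀ i k, IsUnit ((ZMod.castHom (dvd_refl (ringChar R)) R) (a i k)))
    (ha' : ∀ i j, i ≠ j →
      ∀ k, IsUnit ((ZMod.castHom (dvd_refl (ringChar R)) R) (a i k - a j k))) :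
    ‖(1 / (Fintype.card R : ℂ) ^ (n + 1)) *
        ∑ x : R, ∑ y : Fin n → R,
          f 0 x * ∏ i : Fin d,
            f i.succ (x + ∑ k : Fin n,
              (ZMod.castHom (dvd_refl (ringChar R)) R) (a i k) * y k)‖
      ≤ gowersNorm R d (f (Fin.last d)) :=
  gowers_controls_linear_averages_general d n hd hn R f hf a ha ha'
end
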